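/- Let G be a finite group and let 0 → M → N → S → 0 be an exact sequence of G-lattices in which S is stably permutation (i.e. S ⊕ P ≅ Q for some permutation G-lattices P, Q). Then M is equivalent to N in the Colliot-Thélène–Sansuc sense. -/

import Mathlib

open Function

section Core
variable (G : Type) [Group G]

/-- A map is `G`-equivariant. -/
def IsEquivMapP {M N : Type} [AddCommGroup M] [AddCommGroup N]
    [DistribMulAction G M] [DistribMulAction G N] (f : M → N) : Prop :=
  ∀ (g : G) (m : M), f (g • m) = g • f m

/-- `M` is a permutation `G`-lattice: it has a finite `ℤ`-basis permuted by `G`. -/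
def IsPermLat (M : Type) [AddCommGroup M] [DistribMulAction G M] : Prop :=
  ∃ (ι : Type) (_ : Fintype ι) (b : Module.Basis ι ℤ M) (σ : G → ι → ι),
    ∀ (g : G) (i : ι), g • (b i : M) = b (σ g i)

/-- `M` is a lattice: finitely generated and free over `ℤ`. -/
def IsLat (M : Type) [AddCommGroup M] : Prop := Module.Free ℤ M ∧ Module.Finite ℤ M

/-- A short exact sequence `0 → M → E → P → 0` of `G`-modules. -/
def ShortExactG (M E P : Type) [AddCommGroup M] [AddCommGroup E] [AddCommGroup P]
    [DistribMulAction G M] [DistribMulAction G E] [DistribMulAction G P] : Prop :=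
  ∃ (i : M →+ E) (p : E →+ P), IsEquivMapP G i ∧ IsEquivMapP G p ∧
    Injective i ∧ Surjective p ∧ i.range = p.ker

/-- Colliot-Thélène–Sansuc equivalence of `G`-lattices. -/
def LatEquiv (M N : Type) [AddCommGroup M] [AddCommGroup N]
    [DistribMulAction G M] [DistribMulAction G N] : Prop :=
  ∃ (E : Type) (_ : AddCommGroup E) (_ : DistribMulAction G E)
    (P : Type) (_ : AddCommGroup P) (_ : DistribMulAction G P)
    (Q : Type) (_ : AddCommGroup Q) (_ : DistribMulAction G Q),
    IsLat E ∧ IsPermLat G P ∧ IsPermLat G Q ∧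
    ShortExactG G M E P ∧ ShortExactG G N E Q

/-- `M` is stably permutation. -/
def IsStablyPerm (M : Type) [AddCommGroup M] [DistribMulAction G M] : Prop :=
  ∃ (P : Type) (_ : AddCommGroup P) (_ : DistribMulAction G P)
    (Q : Type) (_ : AddCommGroup Q) (_ : DistribMulAction G Q),
    IsPermLat G P ∧ IsPermLat G Q ∧
    ∃ e : (M × P) ≃+ Q, IsEquivMapP G e

/-- `M` is permutation projective: a direct summand of a permutation lattice. -/
def IsPermProj (M : Type) [AddCommGroup M] [DistribMulAction G M] : Prop :=
  ∃ (P : Type) (_ : AddCommGroup P) (_ : DistribMulAction G P), IsPermLat G P ∧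
    ∃ (i : M →+ P) (r : P →+ M), IsEquivMapP G i ∧ IsEquivMapP G r ∧ ∀ m, r (i m) = m

/-- `M` is quasi-permutation: it embeds into a permutation lattice with permutation quotient. -/
def IsQuasiPerm (M : Type) [AddCommGroup M] [DistribMulAction G M] : Prop :=
  ∃ (P : Type) (_ : AddCommGroup P) (_ : DistribMulAction G P)
    (Q : Type) (_ : AddCommGroup Q) (_ : DistribMulAction G Q),
    IsPermLat G P ∧ IsPermLat G Q ∧ ShortExactG G M P Q

variable (M : Type) [AddCommGroup M] [DistribMulAction G M]

/-- 1-cocycles. -/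
def Z1 : AddSubgroup (G → M) where
  carrier := {f | ∀ g h : G, f (g * h) = g • f h + f g}
  zero_mem' := by intro g h; simp
  add_mem' := by
    intro f f' hf hf' g h
    simp only [Pi.add_apply, hf g h, hf' g h, smul_add]; abel
  neg_mem' := by
    intro f hf g h
    simp only [Pi.neg_apply, hf g h, smul_neg]; abel

/-- The coboundary homomorphism. -/
def coboundHom : M →+ Z1 G M where
  toFun m := ⟨fun g => g • m - m, by intro g h; simp only [mul_smul, smul_sub]; abel⟩
  map_zero' := by apply Subtype.ext; funext g; simp
  map_add' := by
    intro a b; apply Subtype.ext; funext g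
    show g • (a + b) - (a + b) = (g • a - a) + (g • b - b)
    simp only [smul_add]; abel

/-- 1-coboundaries. -/
def B1 : AddSubgroup (Z1 G M) := (coboundHom G M).range

/-- First group cohomology `H¹(G, M)`. -/
abbrev H1 := Z1 G M ⧸ B1 G M

/-- Restriction of cocycles to a subgroup. -/
def resZ1 (H : Subgroup G) : Z1 G M →+ Z1 H M where
  toFun f := ⟨fun h => f.1 h, by
    intro a b
    have := f.2 (a : G) (b : G)
    exact this⟩
  map_zero' := rfl
  map_add' := fun _ _ => rfl

/-- Restriction on `H¹`. -/
def resH1 (H : Subgroup G) : H1 G M →+ H1 H M :=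
  QuotientAddGroup.map _ _ (resZ1 G M H) (by
    rintro _ ⟨m, rfl⟩
    exact ⟨m, Subtype.ext rfl⟩)

/-- `Ш¹(G, M)`. -/
def Sha1 : AddSubgroup (H1 G M) :=
  ⨅ g : G, (resH1 G M (Subgroup.zpowers g)).ker

/-- `M` is coflasque: `H¹(H, M) = 0` for all subgroups `H ≤ G`. -/
def IsCoflasque : Prop := ∀ H : Subgroup G, ∀ x y : H1 H M, x = y

end Core

section Core2
variable (G : Type) [Group G] (M : Type) [AddCommGroup M] [DistribMulAction G M]

/-- 2-cocycles. -/
def Z2 : AddSubgroup (G → G → M) where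
  carrier := {f | ∀ g h k : G, g • f h k - f (g * h) k + f g (h * k) - f g h = 0}
  zero_mem' := by intro g h k; simp
  add_mem' := by
    intro f f' hf hf' g h k
    have h1 := hf g h k; have h2 := hf' g h k
    simp only [Pi.add_apply, smul_add]
    calc g • f h k + g • f' h k - (f (g * h) k + f' (g * h) k) +
          (f g (h * k) + f' g (h * k)) - (f g h + f' g h)
        = (g • f h k - f (g * h) k + f g (h * k) - f g h) +
          (g • f' h k - f' (g * h) k + f' g (h * k) - f' g h) := by abel
      _ = 0 := by rw [h1, h2, add_zero]
  neg_mem' := by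
    intro f hf g h k
    have h1 := hf g h k
    simp only [Pi.neg_apply, smul_neg]
    calc -(g • f h k) - -f (g * h) k + -f g (h * k) - -f g h
        = -(g • f h k - f (g * h) k + f g (h * k) - f g h) := by abel
      _ = 0 := by rw [h1, neg_zero]

/-- The 2-coboundary homomorphism. -/
def cobound2Hom : (G → M) →+ Z2 G M where
  toFun u := ⟨fun g h => g • u h - u (g * h) + u g, by
    intro g h k
    simp only [mul_smul, smul_sub, smul_add, mul_assoc]
    abel⟩
  map_zero' := by apply Subtype.ext; funext g h; simp
  map_add' := by
    intro a b; apply Subtype.ext; funext g h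
    show g • (a h + b h) - (a (g * h) + b (g * h)) + (a g + b g)
        = (g • a h - a (g * h) + a g) + (g • b h - b (g * h) + b g)
    simp only [smul_add]; abel

/-- 2-coboundaries. -/
def B2 : AddSubgroup (Z2 G M) := (cobound2Hom G M).range

/-- Second group cohomology `H²(G, M)`. -/
abbrev H2 := Z2 G M ⧸ B2 G M

/-- Restriction of 2-cocycles to a subgroup. -/
def resZ2 (H : Subgroup G) : Z2 G M →+ Z2 H M where
  toFun f := ⟨fun a b => f.1 a b, by
    intro a b c
    have := f.2 (a : G) (b : G) (c : G)
    exact this⟩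
  map_zero' := rfl
  map_add' := fun _ _ => rfl

/-- Restriction on `H²`. -/
def resH2 (H : Subgroup G) : H2 G M →+ H2 H M :=
  QuotientAddGroup.map _ _ (resZ2 G M H) (by
    rintro _ ⟨u, rfl⟩
    exact ⟨fun h : H => u (h : G), Subtype.ext rfl⟩)

/-- `Ш²(G, M)`. -/
def Sha2 : AddSubgroup (H2 G M) :=
  ⨅ g : G, (resH2 G M (Subgroup.zpowers g)).ker

/-- The subgroup `2M`. -/
def twoSub : AddSubgroup M :=
  (AddMonoidHom.mk' (fun m : M => (2 : ℤ) • m) (by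
    intro a b
    show (2 : ℤ) • (a + b) = (2 : ℤ) • a + (2 : ℤ) • b
    rw [smul_add])).range

/-- `M/2M`. -/
abbrev ModTwo := M ⧸ twoSub M

noncomputable instance : SMul G (ModTwo M) :=
  ⟨fun g => QuotientAddGroup.map _ _ (DistribMulAction.toAddMonoidHom M g) (by
    rintro _ ⟨m, rfl⟩
    refine ⟨g • m, ?_⟩
    show (2 : ℤ) • (g • m) = g • ((2 : ℤ) • m)
    rw [smul_comm])⟩

theorem modTwo_smul_mk (g : G) (m : M) :
    g • (QuotientAddGroup.mk m : ModTwo M) = QuotientAddGroup.mk (g • m) := rfl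

noncomputable instance : DistribMulAction G (ModTwo M) where
  one_smul x := by
    obtain ⟨m, rfl⟩ := QuotientAddGroup.mk_surjective x
    rw [modTwo_smul_mk, one_smul]
  mul_smul g h x := by
    obtain ⟨m, rfl⟩ := QuotientAddGroup.mk_surjective x
    rw [modTwo_smul_mk, modTwo_smul_mk, modTwo_smul_mk, mul_smul]
  smul_zero g := map_zero (QuotientAddGroup.map _ _ (DistribMulAction.toAddMonoidHom M g) _)
  smul_add g x y := map_add (QuotientAddGroup.map _ _ (DistribMulAction.toAddMonoidHom M g) _) x y

variable [Finite G]

/-- Kernel of the norm map (for a finite group). -/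
def normKer : AddSubgroup M where
  carrier := {x | ∑ᶠ g : G, g • x = 0}
  zero_mem' := by simp
  add_mem' := by
    intro x y hx hy
    have hx' : ∑ᶠ g : G, g • x = 0 := hx
    have hy' : ∑ᶠ g : G, g • y = 0 := hy
    show ∑ᶠ g : G, g • (x + y) = 0
    simp only [smul_add]
    rw [finsum_add_distrib (Set.toFinite _) (Set.toFinite _), hx', hy', add_zero]
  neg_mem' := by
    intro x hx
    have hx' : ∑ᶠ g : G, g • x = 0 := hx
    show ∑ᶠ g : G, g • (-x) = 0
    simp only [smul_neg]
    rw [finsum_neg_distrib, hx', neg_zero]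

/-- The subgroup generated by elements `g • m - m`. -/
def augSub : AddSubgroup M := AddSubgroup.closure {x | ∃ (g : G) (m : M), x = g • m - m}

/-- Tate cohomology `Ĥ⁻¹(G, M)` (for a finite group `G`). -/
abbrev TateNeg1 := normKer G M ⧸ ((augSub G M).addSubgroupOf (normKer G M))

/-- `M` is flasque: `Ĥ⁻¹(H, M) = 0` for all subgroups `H ≤ G`. -/
def IsFlasque : Prop := ∀ H : Subgroup G, ∀ x y : TateNeg1 H M, x = y

end Core2

section Core3
variable (G : Type) [Group G]

/-- `M` is equivalent to a direct summand of a quasi-permutation `G`-lattice. -/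
def IsEquivSummandQP (M : Type) [AddCommGroup M] [DistribMulAction G M] : Prop :=
  ∃ (S : Type) (_ : AddCommGroup S) (_ : DistribMulAction G S)
    (D : Type) (_ : AddCommGroup D) (_ : DistribMulAction G D)
    (D' : Type) (_ : AddCommGroup D') (_ : DistribMulAction G D'),
    IsLat S ∧ IsQuasiPerm G S ∧ (∃ e : (D × D') ≃+ S, IsEquivMapP G e) ∧
    LatEquiv G M D

end Core3

section Tensor
open TensorProduct
variable (G : Type) [Group G] (M : Type) [AddCommGroup M] [DistribMulAction G M]

/-- The action of `g : G` as a `ℤ`-linear map. -/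
def gLin (g : G) : M →ₗ[ℤ] M := (DistribMulAction.toAddMonoidHom M g).toIntLinearMap

noncomputable instance tensorSMul : SMul G (M ⊗[ℤ] M) :=
  ⟨fun g => TensorProduct.map (gLin G M g) (gLin G M g)⟩

theorem tsmul_def (g : G) (x : M ⊗[ℤ] M) :
    g • x = TensorProduct.map (gLin G M g) (gLin G M g) x := rfl

theorem gLin_one : gLin G M 1 = LinearMap.id := by
  ext m; show (1 : G) • m = m; rw [one_smul]

theorem gLin_mul (g h : G) : gLin G M (g * h) = (gLin G M g).comp (gLin G M h) := by
  ext m; show (g * h) • m = g • h • m; rw [mul_smul]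

noncomputable instance tensorAct : DistribMulAction G (M ⊗[ℤ] M) where
  one_smul x := by rw [tsmul_def, gLin_one, TensorProduct.map_id]; rfl
  mul_smul g h x := by
    rw [tsmul_def, tsmul_def, tsmul_def, gLin_mul, TensorProduct.map_comp]; rfl
  smul_zero g := map_zero _
  smul_add g x y := map_add _ x y

/-- Generators of the symmetric relation. -/
def symSpan : Submodule ℤ (M ⊗[ℤ] M) :=
  Submodule.span ℤ {x | ∃ a b : M, x = a ⊗ₜ[ℤ] b - b ⊗ₜ[ℤ] a}

/-- Generators of the wedge relation. -/
def wedSpan : Submodule ℤ (M ⊗[ℤ] M) :=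
  Submodule.span ℤ {x | ∃ a : M, x = a ⊗ₜ[ℤ] a}

/-- The second symmetric power `Sym²M`. -/
abbrev Sym2Q := (M ⊗[ℤ] M) ⧸ symSpan M

/-- The second exterior power `∧²M`. -/
abbrev Wedge2Q := (M ⊗[ℤ] M) ⧸ wedSpan M

theorem symSpan_le_comap (g : G) :
    symSpan M ≤ (symSpan M).comap (TensorProduct.map (gLin G M g) (gLin G M g)) := by
  refine Submodule.span_le.2 ?_
  rintro _ ⟨a, b, rfl⟩
  exact Submodule.mem_comap.2 (Submodule.subset_span
    ⟨g • a, g • b, by simp only [map_sub, TensorProduct.map_tmul]; rfl⟩)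

theorem wedSpan_le_comap (g : G) :
    wedSpan M ≤ (wedSpan M).comap (TensorProduct.map (gLin G M g) (gLin G M g)) := by
  refine Submodule.span_le.2 ?_
  rintro _ ⟨a, rfl⟩
  exact Submodule.mem_comap.2 (Submodule.subset_span
    ⟨g • a, by simp only [TensorProduct.map_tmul]; rfl⟩)

noncomputable instance sym2SMul : SMul G (Sym2Q M) :=
  ⟨fun g => Submodule.mapQ _ _ (TensorProduct.map (gLin G M g) (gLin G M g))
    (symSpan_le_comap G M g)⟩

noncomputable instance wedge2SMul : SMul G (Wedge2Q M) :=
  ⟨fun g => Submodule.mapQ _ _ (TensorProduct.map (gLin G M g) (gLin G M g))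
    (wedSpan_le_comap G M g)⟩

theorem sym2_smul_mk (g : G) (x : M ⊗[ℤ] M) :
    g • ((symSpan M).mkQ x) = (symSpan M).mkQ (g • x) :=
  Submodule.mapQ_apply _ _ _ _

theorem wedge2_smul_mk (g : G) (x : M ⊗[ℤ] M) :
    g • ((wedSpan M).mkQ x) = (wedSpan M).mkQ (g • x) :=
  Submodule.mapQ_apply _ _ _ _

noncomputable instance sym2Act : DistribMulAction G (Sym2Q M) where
  one_smul x := by
    obtain ⟨y, rfl⟩ := (symSpan M).mkQ_surjective x
    rw [sym2_smul_mk, one_smul]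
  mul_smul g h x := by
    obtain ⟨y, rfl⟩ := (symSpan M).mkQ_surjective x
    rw [sym2_smul_mk, sym2_smul_mk, sym2_smul_mk, mul_smul]
  smul_zero g := map_zero (Submodule.mapQ (symSpan M) (symSpan M) _ (symSpan_le_comap G M g))
  smul_add g x y := map_add (Submodule.mapQ (symSpan M) (symSpan M) _ (symSpan_le_comap G M g)) x y

noncomputable instance wedge2Act : DistribMulAction G (Wedge2Q M) where
  one_smul x := by
    obtain ⟨y, rfl⟩ := (wedSpan M).mkQ_surjective x
    rw [wedge2_smul_mk, one_smul]
  mul_smul g h x := by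
    obtain ⟨y, rfl⟩ := (wedSpan M).mkQ_surjective x
    rw [wedge2_smul_mk, wedge2_smul_mk, wedge2_smul_mk, mul_smul]
  smul_zero g := map_zero (Submodule.mapQ (wedSpan M) (wedSpan M) _ (wedSpan_le_comap G M g))
  smul_add g x y := map_add (Submodule.mapQ (wedSpan M) (wedSpan M) _ (wedSpan_le_comap G M g)) x y

variable {M} {N : Type} [AddCommGroup N]

/-- The map `Sym²f` induced by a linear map `f`. -/
noncomputable def sym2Map (f : M →ₗ[ℤ] N) : Sym2Q M →ₗ[ℤ] Sym2Q N :=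
  Submodule.mapQ _ _ (TensorProduct.map f f) (by
    refine Submodule.span_le.2 ?_
    rintro _ ⟨a, b, rfl⟩
    exact Submodule.mem_comap.2 (Submodule.subset_span
      ⟨f a, f b, by
        exact (map_sub (TensorProduct.map f f) _ _).trans
          (congrArg₂ _ (TensorProduct.map_tmul f f a b) (TensorProduct.map_tmul f f b a))⟩))

/-- The map `∧²f` induced by a linear map `f`. -/
noncomputable def wedge2Map (f : M →ₗ[ℤ] N) : Wedge2Q M →ₗ[ℤ] Wedge2Q N :=
  Submodule.mapQ _ _ (TensorProduct.map f f) (by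
    refine Submodule.span_le.2 ?_
    rintro _ ⟨a, rfl⟩
    exact Submodule.mem_comap.2 (Submodule.subset_span
      ⟨f a, by exact TensorProduct.map_tmul f f a a⟩))

end Tensor

section PermMod
variable (G : Type) [Group G] (X : Type) [MulAction G X]

/-- The permutation action on `ℤ[X] = X → ℤ`. -/
instance permSMul : SMul G (X → ℤ) := ⟨fun g f x => f (g⁻¹ • x)⟩

theorem perm_smul_def (g : G) (f : X → ℤ) (x : X) : (g • f) x = f (g⁻¹ • x) := rfl

instance permAct : DistribMulAction G (X → ℤ) where
  one_smul f := funext fun x => by rw [perm_smul_def, inv_one, one_smul]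
  mul_smul g h f := funext fun x => by
    rw [perm_smul_def, perm_smul_def, perm_smul_def, mul_inv_rev, mul_smul]
  smul_zero g := rfl
  smul_add g f f' := rfl

variable [Fintype X]

/-- The augmentation kernel `A = ker(ℤ[X] → ℤ)`. -/
def augKer : AddSubgroup (X → ℤ) where
  carrier := {f | ∑ x, f x = 0}
  zero_mem' := by simp
  add_mem' := by
    intro a b ha hb
    have ha' : ∑ x, a x = 0 := ha
    have hb' : ∑ x, b x = 0 := hb
    show ∑ x, (a x + b x) = 0
    rw [Finset.sum_add_distrib, ha', hb', add_zero]
  neg_mem' := by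
    intro a ha
    have ha' : ∑ x, a x = 0 := ha
    show ∑ x, (-(a x)) = 0
    rw [Finset.sum_neg_distrib, ha', neg_zero]

theorem smul_mem_augKer (g : G) (f : X → ℤ) (hf : f ∈ augKer X) :
    g • f ∈ augKer X := by
  have hf' : ∑ x, f x = 0 := hf
  show ∑ x, f (g⁻¹ • x) = 0
  exact (Equiv.sum_comp (MulAction.toPerm (g⁻¹ : G)) f).trans hf'

instance augKerSMul : SMul G (augKer X) :=
  ⟨fun g f => ⟨g • (f : X → ℤ), smul_mem_augKer G X g f f.2⟩⟩

theorem augKer_smul_def (g : G) (f : augKer X) :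
    ((g • f : augKer X) : X → ℤ) = g • (f : X → ℤ) := rfl

instance augKerAct : DistribMulAction G (augKer X) where
  one_smul f := Subtype.ext (by rw [augKer_smul_def, one_smul])
  mul_smul g h f := Subtype.ext (by
    rw [augKer_smul_def, augKer_smul_def, augKer_smul_def, mul_smul])
  smul_zero g := Subtype.ext (by
    rw [augKer_smul_def]
    show g • (0 : X → ℤ) = 0
    rw [smul_zero])
  smul_add g f f' := Subtype.ext (by
    show g • ((f : X → ℤ) + f') = g • (f : X → ℤ) + g • (f' : X → ℤ)
    rw [smul_add])

end PermMod

section P2sec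
variable (G : Type) [Group G]

/-- The set of 2-element subsets of `X`. -/
def P2 (X : Type) [DecidableEq X] : Type := {s : Finset X // s.card = 2}

noncomputable instance (X : Type) [DecidableEq X] [Fintype X] : Fintype (P2 X) := by
  unfold P2; infer_instance

instance p2SMul (X : Type) [DecidableEq X] [MulAction G X] : SMul G (P2 X) :=
  ⟨fun g s => ⟨s.1.image (fun x => g • x), by
    rw [Finset.card_image_of_injective _ (MulAction.injective g)]; exact s.2⟩⟩

theorem p2_smul_def (X : Type) [DecidableEq X] [MulAction G X] (g : G) (s : P2 X) :
    (g • s).1 = s.1.image (fun x => g • x) := rfl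

instance p2Act (X : Type) [DecidableEq X] [MulAction G X] : MulAction G (P2 X) where
  one_smul s := Subtype.ext (by
    rw [p2_smul_def]
    simp)
  mul_smul g h s := Subtype.ext (by
    simp only [p2_smul_def, Finset.image_image]
    refine Finset.image_congr ?_
    intro x _
    exact mul_smul g h x)

end P2sec

/-- The root lattice `A_{n-1}` as an `S_n`-lattice. -/
abbrev rootLat (n : ℕ) := augKer (Fin n)

/-! Given `S × P ≃ Q`, the lattice `E = N × P` sits both in `0 → M → N × P → S × P ≃ Q → 0`
(the given sequence plus the identity of `P`) and in the split sequence `0 → N → N × P → P → 0`. -/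

section LatticeEquivalence
variable {G : Type} [Group G]

theorem IsPermLat.isLat {P : Type} [AddCommGroup P] [DistribMulAction G P]
    (hP : IsPermLat G P) : IsLat P := by
  obtain ⟨_, _, b, -⟩ := hP
  exact ⟨.of_basis b, .of_basis b⟩

theorem IsLat.prod {M N : Type} [AddCommGroup M] [AddCommGroup N]
    (hM : IsLat M) (hN : IsLat N) : IsLat (M × N) := by
  obtain ⟨_, _⟩ := hM
  obtain ⟨_, _⟩ := hN
  exact ⟨inferInstance, inferInstance⟩

variable {M E S P Q : Type} [AddCommGroup M] [AddCommGroup E] [AddCommGroup S]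
  [AddCommGroup P] [AddCommGroup Q] [DistribMulAction G M] [DistribMulAction G E]
  [DistribMulAction G S] [DistribMulAction G P] [DistribMulAction G Q]

theorem shortExactG_inl_snd : ShortExactG G E (E × P) P := by
  refine ⟨.inl E P, .snd E P, fun g _ => Prod.ext rfl (smul_zero g).symm, fun _ _ => rfl,
    fun _ _ => congrArg Prod.fst, Prod.snd_surjective, ?_⟩
  ext ⟨e, p⟩
  simp [AddSubgroup.mem_prod, eq_comm]

namespace ShortExactG

theorem prod_right (h : ShortExactG G M E S) :
    ShortExactG G M (E × P) (S × P) := by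
  obtain ⟨i, π, hi, hπ, hinj, hsurj, hexact⟩ := h
  refine ⟨(AddMonoidHom.inl E P).comp i, π.prodMap (.id P),
    fun g m => Prod.ext (hi g m) (smul_zero g).symm, fun g x => Prod.ext (hπ g x.1) rfl,
    fun a b hab => hinj (congrArg Prod.fst hab),
    Prod.map_surjective.2 ⟨hsurj, surjective_id⟩, ?_⟩
  rw [AddMonoidHom.ker_prodMap, ← hexact]
  ext ⟨e, p⟩
  simp [AddSubgroup.mem_prod, eq_comm]

theorem comp_addEquiv (h : ShortExactG G M E S) (φ : S ≃+ Q) (hφ : IsEquivMapP G φ) :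
    ShortExactG G M E Q := by
  obtain ⟨i, π, hi, hπ, hinj, hsurj, hexact⟩ := h
  refine ⟨i, φ.toAddMonoidHom.comp π, hi, fun g x => (congrArg φ (hπ g x)).trans (hφ g (π x)),
    hinj, φ.surjective.comp hsurj, ?_⟩
  rw [hexact, AddMonoidHom.ker_comp_of_injective _ _ φ.injective]

end ShortExactG

end LatticeEquivalence

theorem stmt_2_general (G : Type) [Group G]
    (M N S : Type) [AddCommGroup M] [AddCommGroup N] [AddCommGroup S]
    [DistribMulAction G M] [DistribMulAction G N] [DistribMulAction G S]
    (hN : IsLat N)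
    (hse : ShortExactG G M N S) (hstab : IsStablyPerm G S) :
    LatEquiv G M N := by
  obtain ⟨P, _, _, Q, _, _, hP, hQ, φ, hφ⟩ := hstab
  exact ⟨N × P, _, _, Q, _, _, P, _, _, hN.prod hP.isLat, hQ, hP,
    hse.prod_right.comp_addEquiv φ hφ, shortExactG_inl_snd⟩

theorem stmt_2 (G : Type) [Group G]
    (M N S : Type) [AddCommGroup M] [AddCommGroup N] [AddCommGroup S]
    [DistribMulAction G M] [DistribMulAction G N] [DistribMulAction G S]
    (hM : IsLat M) (hN : IsLat N) (hS : IsLat S)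
    (hse : ShortExactG G M N S) (hstab : IsStablyPerm G S) :
    LatEquiv G M N :=
  stmt_2_general G M N S hN hse hstab
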